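/- Let H be a Hilbert space and T : H → H nonexpansive with at least one fixed point. For a constant κ ∈ (0,1), the Krasnosel'skii–Mann iteration f_{n+1} = (1−κ) f_n + κ T f_n converges weakly to a fixed point of T. -/

import Mathlib

/-!
For every fixed point `q` the identity
`‖(1 - κ) a + κ b‖² = (1 - κ)‖a‖² + κ‖b‖² - κ(1 - κ)‖a - b‖²` applied to `a = f n - q`,
`b = T (f n) - q` gives `‖f (n+1) - q‖² ≤ ‖f n - q‖² - κ(1 - κ)‖f n - T (f n)‖²`. So the
distances to fixed points are nonincreasing and `f n - T (f n) → 0`. By demiclosedness of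
`I - T`, every weak cluster point of the bounded sequence `f` is a fixed point, and two weak
cluster points `p, q` coincide because `⟪f n, q - p⟫` converges, by polarization, along the
whole sequence (Opial's argument).
-/

open Filter Topology Function
open scoped RealInnerProductSpace

section

variable {H : Type*} [NormedAddCommGroup H] [InnerProductSpace ℝ H]

def WeakTendsto (u : ℕ → H) (p : H) : Prop :=
  ∀ y, Tendsto (fun n => ⟪u n, y⟫) atTop (𝓝 ⟪p, y⟫)

/-- Banach–Alaoglu applies in the separable closed span `K` of the sequence, and the weak limit
found in `K` is a weak limit in `H` because `⟪k, y⟫ = ⟪k, P_K y⟫` for `k ∈ K`. -/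
theorem exists_strictMono_weakTendsto [CompleteSpace H] {u : ℕ → H} {C : ℝ}
    (hu : ∀ n, ‖u n‖ ≤ C) : ∃ φ : ℕ → ℕ, StrictMono φ ∧ ∃ p, WeakTendsto (u ∘ φ) p := by
  set K := (Submodule.span ℝ (Set.range u)).topologicalClosure
  have : CompleteSpace K := (Submodule.isClosed_topologicalClosure _).completeSpace_coe
  have : TopologicalSpace.SeparableSpace K := by
    apply TopologicalSpace.IsSeparable.separableSpace
    rw [Submodule.topologicalClosure_coe]
    exact (Set.countable_range u).isSeparable.span.closure
  have huK : ∀ n, u n ∈ K := fun n =>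
    Submodule.le_topologicalClosure _ (Submodule.subset_span ⟨n, rfl⟩)
  set x : ℕ → StrongDual ℝ K := fun n => InnerProductSpace.toDual ℝ K ⟨u n, huK n⟩
  have hx : ∀ n, StrongDual.toWeakDual (x n) ∈
      WeakDual.toStrongDual ⁻¹' Metric.closedBall (0 : StrongDual ℝ K) C := fun n =>
    (dist_zero_right (x n)).trans_le ((LinearIsometryEquiv.norm_map _ _).trans_le (hu n))
  obtain ⟨ℓ, -, φ, hφ, hlim⟩ := WeakDual.isSeqCompact_closedBall ℝ K 0 C hx
  refine ⟨φ, hφ, ((InnerProductSpace.toDual ℝ K).symm (WeakDual.toStrongDual ℓ) : H), fun y => ?_⟩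
  have hPy := ((WeakDual.eval_continuous (K.orthogonalProjectionOnto y)).tendsto ℓ).comp hlim
  have hp : ⟪((InnerProductSpace.toDual ℝ K).symm (WeakDual.toStrongDual ℓ) : H), y⟫ =
      ℓ (K.orthogonalProjectionOnto y) := by
    rw [← Submodule.inner_orthogonalProjectionOnto_eq_of_mem_left,
      InnerProductSpace.toDual_symm_apply]
    rfl
  rw [hp]
  refine hPy.congr fun n => ?_
  simp [x, InnerProductSpace.toDual_apply_apply]

theorem tendsto_inner_sub_of_tendsto_norm_sub {u : ℕ → H} {p q : H} {a b : ℝ}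
    (hp : Tendsto (fun n => ‖u n - p‖) atTop (𝓝 a))
    (hq : Tendsto (fun n => ‖u n - q‖) atTop (𝓝 b)) :
    Tendsto (fun n => ⟪u n, q - p⟫) atTop (𝓝 ((a ^ 2 - b ^ 2 - ‖p‖ ^ 2 + ‖q‖ ^ 2) / 2)) := by
  have polarization : ∀ n,
      ⟪u n, q - p⟫ = (‖u n - p‖ ^ 2 - ‖u n - q‖ ^ 2 - ‖p‖ ^ 2 + ‖q‖ ^ 2) / 2 := fun n => by
    rw [norm_sub_sq_real, norm_sub_sq_real, inner_sub_right]; ring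
  simp_rw [polarization]
  exact ((((hp.pow 2).sub (hq.pow 2)).sub_const _).add_const _).div_const 2

theorem eq_of_weakTendsto_of_tendsto_inner {u : ℕ → H} {φ ψ : ℕ → ℕ} {p q : H} {ℓ : ℝ}
    (hφ : Tendsto φ atTop atTop) (hψ : Tendsto ψ atTop atTop)
    (hp : WeakTendsto (u ∘ φ) p) (hq : WeakTendsto (u ∘ ψ) q)
    (hℓ : Tendsto (fun n => ⟪u n, q - p⟫) atTop (𝓝 ℓ)) : p = q := by
  have hpℓ : ⟪p, q - p⟫ = ℓ := tendsto_nhds_unique (hp _) (hℓ.comp hφ)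
  have hqℓ : ⟪q, q - p⟫ = ℓ := tendsto_nhds_unique (hq _) (hℓ.comp hψ)
  have : ⟪q - p, q - p⟫ = 0 := by rw [inner_sub_left, hpℓ, hqℓ, sub_self]
  exact (sub_eq_zero.mp (inner_self_eq_zero.mp this)).symm

/-- Opial's lemma. -/
theorem weakTendsto_of_forall_tendsto_norm_sub [CompleteSpace H] {u : ℕ → H} {C : ℝ}
    {F : Set H} (hu : ∀ n, ‖u n‖ ≤ C)
    (hnorm : ∀ q ∈ F, ∃ a, Tendsto (fun n => ‖u n - q‖) atTop (𝓝 a))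
    (hcluster : ∀ φ : ℕ → ℕ, ∀ p, Tendsto φ atTop atTop → WeakTendsto (u ∘ φ) p → p ∈ F) :
    ∃ p ∈ F, WeakTendsto u p := by
  obtain ⟨φ, hφ, p, hp⟩ := exists_strictMono_weakTendsto hu
  have hpF := hcluster φ p hφ.tendsto_atTop hp
  refine ⟨p, hpF, fun y => tendsto_of_subseq_tendsto fun ψ hψ => ?_⟩
  obtain ⟨χ, hχ, q, hq⟩ := exists_strictMono_weakTendsto fun n => hu (ψ n)
  have hψχ := hψ.comp hχ.tendsto_atTop
  have hqF := hcluster (ψ ∘ χ) q hψχ hq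
  obtain ⟨a, ha⟩ := hnorm p hpF
  obtain ⟨b, hb⟩ := hnorm q hqF
  obtain rfl : p = q := eq_of_weakTendsto_of_tendsto_inner hφ.tendsto_atTop hψχ hp hq
    (tendsto_inner_sub_of_tendsto_norm_sub ha hb)
  exact ⟨χ, hq y⟩

/-- Demiclosedness of `I - T` at `0`. -/
theorem isFixedPt_of_weakTendsto {T : H → H} (hT : LipschitzWith 1 T) {u : ℕ → H} {C : ℝ}
    {p : H} (hu : ∀ n, ‖u n‖ ≤ C) (hreg : Tendsto (fun n => ‖u n - T (u n)‖) atTop (𝓝 0))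
    (hp : WeakTendsto u p) : IsFixedPt T p := by
  set d := p - T p
  have key : ∀ n, ‖d‖ ^ 2 + 2 * ⟪u n - p, d⟫ ≤
      ‖u n - T (u n)‖ * (‖u n - T (u n)‖ + 2 * (C + ‖p‖)) := by
    intro n
    have hexpand : ‖u n - T p‖ ^ 2 = ‖u n - p‖ ^ 2 + 2 * ⟪u n - p, d⟫ + ‖d‖ ^ 2 := by
      rw [← norm_add_sq_real, sub_add_sub_cancel]
    have htri : ‖u n - T p‖ ≤ ‖u n - T (u n)‖ + ‖u n - p‖ := by
      calc ‖u n - T p‖ = ‖(u n - T (u n)) + (T (u n) - T p)‖ := by congr 1; abel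
        _ ≤ ‖u n - T (u n)‖ + ‖T (u n) - T p‖ := norm_add_le _ _
        _ ≤ ‖u n - T (u n)‖ + ‖u n - p‖ := by
          gcongr; simpa using hT.norm_sub_le (u n) p
    have hbound : ‖u n - p‖ ≤ C + ‖p‖ := (norm_sub_le _ _).trans (by linarith [hu n])
    nlinarith [norm_nonneg (u n - T (u n)), norm_nonneg (u n - p), norm_nonneg (u n - T p)]
  have hlhs : Tendsto (fun n => ‖d‖ ^ 2 + 2 * ⟪u n - p, d⟫) atTop (𝓝 (‖d‖ ^ 2)) := by
    have := ((hp d).sub_const ⟪p, d⟫).const_mul 2 |>.const_add (‖d‖ ^ 2)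
    simpa [inner_sub_left] using this
  have hrhs : Tendsto (fun n => ‖u n - T (u n)‖ * (‖u n - T (u n)‖ + 2 * (C + ‖p‖)))
      atTop (𝓝 0) := by
    simpa using hreg.mul (hreg.add_const (2 * (C + ‖p‖)))
  have : ‖d‖ ^ 2 ≤ 0 := le_of_tendsto_of_tendsto' hlhs hrhs key
  have : d = 0 := by simpa using this
  exact (sub_eq_zero.mp this).symm

theorem norm_smul_add_smul_sq {a b : ℝ} (hab : a + b = 1) (x y : H) :
    ‖a • x + b • y‖ ^ 2 = a * ‖x‖ ^ 2 + b * ‖y‖ ^ 2 - a * b * ‖x - y‖ ^ 2 := by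
  rw [norm_add_sq_real, norm_sub_sq_real, norm_smul, norm_smul, real_inner_smul_left,
    real_inner_smul_right, mul_pow, mul_pow, Real.norm_eq_abs, Real.norm_eq_abs, sq_abs, sq_abs]
  obtain rfl := eq_sub_of_add_eq hab
  ring

theorem norm_averaged_sub_sq_le {T : H → H} (hT : LipschitzWith 1 T) {q : H}
    (hq : IsFixedPt T q) {κ : ℝ} (hκ : 0 ≤ κ) (x : H) :
    ‖(1 - κ) • x + κ • T x - q‖ ^ 2 ≤ ‖x - q‖ ^ 2 - κ * (1 - κ) * ‖x - T x‖ ^ 2 := by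
  have hTx : ‖T x - q‖ ≤ ‖x - q‖ := by
    simpa [hq.eq] using hT.norm_sub_le x q
  have hsplit : (1 - κ) • x + κ • T x - q = (1 - κ) • (x - q) + κ • (T x - q) := by module
  rw [hsplit, norm_smul_add_smul_sq (sub_add_cancel 1 κ), sub_sub_sub_cancel_right]
  have := pow_le_pow_left₀ (norm_nonneg _) hTx 2
  nlinarith

section KrasnoselskiiMann

variable {T : H → H} {κ : ℝ} {f : ℕ → H}

theorem antitone_norm_sub_of_isFixedPt (hT : LipschitzWith 1 T) (hκ0 : 0 ≤ κ) (hκ1 : κ ≤ 1)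
    (hrec : ∀ n, f (n + 1) = (1 - κ) • f n + κ • T (f n)) {q : H} (hq : IsFixedPt T q) :
    Antitone fun n => ‖f n - q‖ := by
  refine antitone_nat_of_succ_le fun n => ?_
  have h := norm_averaged_sub_sq_le hT hq hκ0 (f n)
  rw [← hrec] at h
  have : 0 ≤ κ * (1 - κ) * ‖f n - T (f n)‖ ^ 2 := by
    have : 0 ≤ 1 - κ := sub_nonneg.2 hκ1
    positivity
  exact (pow_le_pow_iff_left₀ (norm_nonneg _) (norm_nonneg _) two_ne_zero).1 (by linarith)

theorem exists_tendsto_norm_sub_of_isFixedPt (hT : LipschitzWith 1 T) (hκ0 : 0 ≤ κ)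
    (hκ1 : κ ≤ 1) (hrec : ∀ n, f (n + 1) = (1 - κ) • f n + κ • T (f n)) {q : H}
    (hq : IsFixedPt T q) : ∃ a, Tendsto (fun n => ‖f n - q‖) atTop (𝓝 a) :=
  ⟨_, tendsto_atTop_ciInf (antitone_norm_sub_of_isFixedPt hT hκ0 hκ1 hrec hq)
    ⟨0, by rintro _ ⟨n, rfl⟩; positivity⟩⟩

theorem tendsto_norm_sub_apply_zero (hT : LipschitzWith 1 T) (hκ0 : 0 < κ) (hκ1 : κ < 1)
    (hrec : ∀ n, f (n + 1) = (1 - κ) • f n + κ • T (f n)) (hfix : ∃ q, IsFixedPt T q) :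
    Tendsto (fun n => ‖f n - T (f n)‖) atTop (𝓝 0) := by
  obtain ⟨q, hq⟩ := hfix
  obtain ⟨a, ha⟩ := exists_tendsto_norm_sub_of_isFixedPt hT hκ0.le hκ1.le hrec hq
  have hc : 0 < κ * (1 - κ) := mul_pos hκ0 (sub_pos.2 hκ1)
  have hbound : ∀ n,
      ‖f n - T (f n)‖ ≤ √((‖f n - q‖ ^ 2 - ‖f (n + 1) - q‖ ^ 2) / (κ * (1 - κ))) := by
    intro n
    refine Real.le_sqrt_of_sq_le ((le_div_iff₀ hc).2 ?_)
    have h := norm_averaged_sub_sq_le hT hq hκ0.le (f n)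
    rw [← hrec] at h
    linarith
  have hlim : Tendsto (fun n => √((‖f n - q‖ ^ 2 - ‖f (n + 1) - q‖ ^ 2) / (κ * (1 - κ))))
      atTop (𝓝 0) := by
    have := (((ha.pow 2).sub ((ha.comp (tendsto_add_atTop_nat 1)).pow 2)).div_const
      (κ * (1 - κ))).sqrt
    simpa using this
  exact squeeze_zero (fun n => norm_nonneg _) hbound hlim

end KrasnoselskiiMann

end

/-- Krasnosel'skii–Mann: for a nonexpansive map `T` on a real Hilbert space with a
fixed point and `κ ∈ (0,1)`, the iteration `f_{n+1} = (1−κ) f_n + κ T f_n`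
converges weakly to a fixed point of `T`. -/
theorem krasnoselskii_mann_weak_convergence
    {H : Type*} [NormedAddCommGroup H] [InnerProductSpace ℝ H] [CompleteSpace H]
    (T : H → H) (hT : ∀ u v : H, ‖T u - T v‖ ≤ ‖u - v‖)
    (hfix : ∃ p : H, T p = p)
    (κ : ℝ) (hκ0 : 0 < κ) (hκ1 : κ < 1)
    (f : ℕ → H) (hrec : ∀ n, f (n + 1) = (1 - κ) • f n + κ • T (f n)) :
    ∃ p : H, T p = p ∧
      ∀ y : H, Tendsto (fun n => (inner ℝ (f n) y : ℝ)) atTop (nhds (inner ℝ p y)) := by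
  have hT' : LipschitzWith 1 T :=
    LipschitzWith.mk_one fun u v => by simpa only [dist_eq_norm] using hT u v
  obtain ⟨p₀, hp₀⟩ := hfix
  have hbdd : ∀ n, ‖f n‖ ≤ ‖p₀‖ + ‖f 0 - p₀‖ := fun n =>
    (norm_le_norm_add_norm_sub' (f n) p₀).trans <| add_le_add_right
      (antitone_norm_sub_of_isFixedPt hT' hκ0.le hκ1.le hrec hp₀ (Nat.zero_le n)) _
  have hreg := tendsto_norm_sub_apply_zero hT' hκ0 hκ1 hrec ⟨p₀, hp₀⟩
  exact weakTendsto_of_forall_tendsto_norm_sub (F := fixedPoints T) hbdd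
    (fun q hq => exists_tendsto_norm_sub_of_isFixedPt hT' hκ0.le hκ1.le hrec hq)
    (fun φ p hφ hp => isFixedPt_of_weakTendsto hT' (fun n => hbdd _) (hreg.comp hφ) hp)
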